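/- arXiv:2203.09868 — 5 statements merged into one kernel-verified Lean document; each statement's English description precedes it below -/
import Mathlib

section
/- Let G = (V,E) be a finite simple connected graph and C ⊆ V. Suppose there exists a vector y : E → ℝ with 0 ≤ y_e ≤ 1 for all e ∈ E such that, setting x = χ^C: x_u + x_v ≥ 1 for every edge uv ∈ E; y(E(U)) ≤ |U| − 1 for every nonempty U ⊆ V; y(E) = x(V) − 1; and y_uv ≤ x_u and y_uv ≤ x_v for every edge uv ∈ E. Then C is a vertex cover of G and the induced subgraph G[C] is connected, i.e., C is a connected vertex cover of G. -/
theorem stmt_1 {V : Type*} [Fintype V] [DecidableEq V]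
    (G : SimpleGraph V) [DecidableRel G.Adj] (hG : G.Connected)
    (C : Set V) [DecidablePred (· ∈ C)]
    (x : V → ℝ) (hx : x = fun v => if v ∈ C then 1 else 0)
    (y : Sym2 V → ℝ)
    (hy01 : ∀ e ∈ G.edgeSet, 0 ≤ y e ∧ y e ≤ 1)
    (hcov : ∀ u v : V, G.Adj u v → x u + x v ≥ 1)
    (hsub : ∀ U : Finset V, U.Nonempty →
      ∑ e ∈ G.edgeFinset.filter (fun e => ∀ v ∈ e, v ∈ U), y e ≤ (U.card : ℝ) - 1)
    (hall : ∑ e ∈ G.edgeFinset, y e = ∑ v, x v - 1)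
    (hlink : ∀ u v : V, G.Adj u v → y s(u, v) ≤ x u ∧ y s(u, v) ≤ x v) :
    (∀ u v : V, G.Adj u v → u ∈ C ∨ v ∈ C) ∧ (G.induce C).Connected := by
  classical
  subst hx
  have hcov' : ∀ u v : V, G.Adj u v → u ∈ C ∨ v ∈ C := by
    intro u v huv
    by_contra h
    push_neg at h
    have h2 := hcov u v huv
    simp only [if_neg h.1, if_neg h.2] at h2
    linarith
  refine ⟨hcov', ?_⟩
  set Cs : Finset V := Finset.univ.filter (· ∈ C) with hCs
  have hmemCs : ∀ v, v ∈ Cs ↔ v ∈ C := by intro v; simp [hCs]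
  have hxsum : ∑ v, (if v ∈ C then (1:ℝ) else 0) = (Cs.card : ℝ) := by
    rw [Finset.sum_boole]
  have hynn : ∀ e ∈ G.edgeFinset, 0 ≤ y e := fun e he =>
    (hy01 e (SimpleGraph.mem_edgeFinset.mp he)).1
  have hsnn : (0:ℝ) ≤ ∑ e ∈ G.edgeFinset, y e := Finset.sum_nonneg hynn
  have hall' : ∑ e ∈ G.edgeFinset, y e = (Cs.card : ℝ) - 1 := by rw [hall, hxsum]
  have hCsne : Cs.Nonempty := by
    rw [← Finset.card_pos]
    by_contra h
    push_neg at h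
    have h0 : Cs.card = 0 := by omega
    rw [h0] at hall'
    push_cast at hall'
    linarith
  obtain ⟨u0, hu0Cs⟩ := hCsne
  have hu0 : u0 ∈ C := (hmemCs u0).mp hu0Cs
  set A : Finset V := Cs.filter
    (fun v => ∃ h : v ∈ C, (G.induce C).Reachable ⟨u0, hu0⟩ ⟨v, h⟩) with hA
  set B : Finset V := Cs \ A with hBdef
  have hu0A : u0 ∈ A := by
    rw [hA, Finset.mem_filter]
    exact ⟨hu0Cs, hu0, SimpleGraph.Reachable.refl _⟩
  have hstep : ∀ u v, G.Adj u v → u ∈ A → v ∈ C → v ∈ A := by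
    intro u v huv huA hvC
    rw [hA, Finset.mem_filter] at huA ⊢
    obtain ⟨huCs, huC, hr⟩ := huA
    refine ⟨(hmemCs v).mpr hvC, hvC, hr.trans ?_⟩
    have hadj : (G.induce C).Adj ⟨u, huC⟩ ⟨v, hvC⟩ := huv
    exact hadj.reachable
  have hyzero : ∀ u v, s(u,v) ∈ G.edgeFinset → ¬(u ∈ A ∧ v ∈ A) →
      ¬(u ∈ B ∧ v ∈ B) → y s(u,v) = 0 := by
    intro u v he hnA hnB
    have huv : G.Adj u v := by rwa [SimpleGraph.mem_edgeFinset, SimpleGraph.mem_edgeSet] at he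
    have hnn : 0 ≤ y s(u,v) := hynn _ he
    by_cases huC : u ∈ C
    · by_cases hvC : v ∈ C
      · exfalso
        have huCs : u ∈ Cs := (hmemCs u).mpr huC
        have hvCs : v ∈ Cs := (hmemCs v).mpr hvC
        by_cases huA : u ∈ A
        · exact hnA ⟨huA, hstep u v huv huA hvC⟩
        · by_cases hvA : v ∈ A
          · exact huA (hstep v u huv.symm hvA huC)
          · exact hnB ⟨Finset.mem_sdiff.mpr ⟨huCs, huA⟩, Finset.mem_sdiff.mpr ⟨hvCs, hvA⟩⟩
      · have := (hlink u v huv).2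
        simp only [if_neg hvC] at this
        linarith
    · have := (hlink u v huv).1
      simp only [if_neg huC] at this
      linarith
  have hAsub : A ⊆ Cs := Finset.filter_subset _ _
  have hcard : B.card + A.card = Cs.card := Finset.card_sdiff_add_card_eq_card hAsub
  have hBempty : B = ∅ := by
    by_contra hBne'
    have hBne : B.Nonempty := Finset.nonempty_iff_ne_empty.mpr hBne'
    have h1 : ∑ e ∈ G.edgeFinset, y e
        = ∑ e ∈ G.edgeFinset.filter (fun e => ∀ v ∈ e, v ∈ A), y e
          + ∑ e ∈ G.edgeFinset.filter (fun e => ¬ ∀ v ∈ e, v ∈ A), y e :=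
      (Finset.sum_filter_add_sum_filter_not _ _ y).symm
    have h2 : ∑ e ∈ G.edgeFinset.filter (fun e => ¬ ∀ v ∈ e, v ∈ A), y e
        = ∑ e ∈ G.edgeFinset.filter (fun e => ∀ v ∈ e, v ∈ B), y e := by
      rw [← Finset.sum_filter_add_sum_filter_not
        (G.edgeFinset.filter (fun e => ¬ ∀ v ∈ e, v ∈ A)) (fun e => ∀ v ∈ e, v ∈ B) y]
      have hz : ∑ e ∈ (G.edgeFinset.filter (fun e => ¬ ∀ v ∈ e, v ∈ A)).filter
          (fun e => ¬ ∀ v ∈ e, v ∈ B), y e = 0 := by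
        apply Finset.sum_eq_zero
        intro e he
        induction e using Sym2.ind with
        | _ u v =>
          simp only [Finset.mem_filter, Sym2.mem_iff, forall_eq_or_imp, forall_eq] at he
          obtain ⟨⟨heS, hnA⟩, hnB⟩ := he
          exact hyzero u v heS hnA hnB
      rw [hz, add_zero, Finset.filter_filter]
      refine Finset.sum_congr (Finset.filter_congr ?_) (fun _ _ => rfl)
      intro e he
      induction e using Sym2.ind with
      | _ u v =>
        simp only [Sym2.mem_iff, forall_eq_or_imp, forall_eq]
        constructor
        · exact fun h => h.2
        · intro h
          refine ⟨fun hA' => ?_, h⟩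
          exact (Finset.mem_sdiff.mp h.1).2 hA'.1
    have hAle := hsub A ⟨u0, hu0A⟩
    have hBle := hsub B hBne
    have hfinal : (Cs.card : ℝ) - 1 ≤ ((A.card:ℝ) - 1) + ((B.card:ℝ) - 1) := by
      rw [← hall', h1, h2]
      exact add_le_add hAle hBle
    have hcardR : (B.card : ℝ) + (A.card:ℝ) = (Cs.card:ℝ) := by exact_mod_cast hcard
    linarith
  have hreach : ∀ v (hv : v ∈ C), (G.induce C).Reachable ⟨u0, hu0⟩ ⟨v, hv⟩ := by
    intro v hv
    have hvA : v ∈ A := by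
      by_contra h
      have hvB : v ∈ B := Finset.mem_sdiff.mpr ⟨(hmemCs v).mpr hv, h⟩
      rw [hBempty] at hvB
      simp at hvB
    rw [hA, Finset.mem_filter] at hvA
    obtain ⟨-, h', hr⟩ := hvA
    exact hr
  haveI : Nonempty ↥C := ⟨⟨u0, hu0⟩⟩
  refine ⟨?_⟩
  rintro ⟨a, ha⟩ ⟨b, hb⟩
  exact (hreach a ha).symm.trans (hreach b hb)
end

section
/- Let G = (V,E) be a finite simple connected graph and C ⊆ V, and set x = χ^C. Then C is a connected vertex cover of G if and only if x_u + x_v ≥ 1 for every edge uv ∈ E and there exists a vector y : E → ℝ lying in the convex hull (in ℝ^E) of the incidence vectors of the forests of G, such that y(E) = x(V) − 1 and y_uv ≤ x_u and y_uv ≤ x_v for every edge uv ∈ E. -/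
/-!
A spanning tree of `G[C]` is a forest of `G` with `|C| - 1` edges, all inside `C`; its indicator
vector is the required `y`. Conversely, `y_e ≤ 0` on every edge leaving `C`, so the linear
functional `z ↦ ∑_{e ⊆ C} z_e` is at least `|C| - 1` at `y`, hence at some vertex `χ^F` of the
forest polytope. Then `F` restricted to `C` is an acyclic graph on `|C|` vertices with at least
`|C| - 1` edges, i.e. a spanning tree of `G[C]`.
-/

open Finset

lemma exists_sum_ge_of_mem_convexHull {ι : Type*} {S : Set (ι → ℝ)} {y : ι → ℝ}
    (hy : y ∈ convexHull ℝ S) (s : Finset ι) : ∃ z ∈ S, ∑ i ∈ s, y i ≤ ∑ i ∈ s, z i := by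
  simpa using ((∑ i ∈ s, LinearMap.proj i : (ι → ℝ) →ₗ[ℝ] ℝ).convexOn
    convex_univ).exists_ge_of_mem_convexHull (Set.subset_univ _) hy

lemma exists_sum_le_of_mem_convexHull {ι : Type*} {S : Set (ι → ℝ)} {y : ι → ℝ}
    (hy : y ∈ convexHull ℝ S) (s : Finset ι) : ∃ z ∈ S, ∑ i ∈ s, z i ≤ ∑ i ∈ s, y i := by
  simpa using ((∑ i ∈ s, LinearMap.proj i : (ι → ℝ) →ₗ[ℝ] ℝ).concaveOn
    convex_univ).exists_le_of_mem_convexHull (Set.subset_univ _) hy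

namespace SimpleGraph

variable {W : Type*}

lemma IsAcyclic.of_induce {G : SimpleGraph W} {s : Set W} (hs : G.support ⊆ s)
    (h : (G.induce s).IsAcyclic) : G.IsAcyclic := by
  intro v c hc
  have hsupp : ∀ w ∈ c.support, w ∈ s := fun w hw ↦
    hs (mem_support_of_mem_walk_support c hc.not_nil hw)
  refine h (c.induce s hsupp) ?_
  rwa [← Walk.isCycle_map_iff_of_injective (f := (Embedding.induce s).toHom) Subtype.val_injective,
    Walk.map_induce]

lemma IsAcyclic.spanningCoe {s : Set W} {H : SimpleGraph s} (h : H.IsAcyclic) :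
    H.spanningCoe.IsAcyclic :=
  .of_induce (s := s) (by simp [support_spanningCoe]) (by rwa [induce_spanningCoe])

lemma card_edgeSet_spanningCoe {s : Set W} (H : SimpleGraph s) :
    Nat.card H.spanningCoe.edgeSet = Nat.card H.edgeSet := by
  rw [edgeSet_map, Nat.card_image_of_injective (Function.Embedding.sym2Map _).injective]

lemma edgeSet_spanningCoe_induce (H : SimpleGraph W) (s : Set W) :
    (H.induce s).spanningCoe.edgeSet = H.edgeSet ∩ s.sym2 := by
  ext e
  induction e using Sym2.ind with
  | _ u v =>
    simp only [mem_edgeSet, map_adj, comap_adj, Function.Embedding.coe_subtype, Set.mem_inter_iff,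
      Set.mk_mem_sym2_iff]
    constructor
    · rintro ⟨u, v, huv, rfl, rfl⟩
      exact ⟨huv, u.2, v.2⟩
    · rintro ⟨huv, hu, hv⟩
      exact ⟨⟨u, hu⟩, ⟨v, hv⟩, huv, rfl, rfl⟩

lemma IsAcyclic.connected_of_card_le [Finite W] [Nonempty W] {K : SimpleGraph W}
    (hK : K.IsAcyclic) (hcard : Nat.card W ≤ Nat.card K.edgeSet + 1) : K.Connected := by
  obtain ⟨T, hKT, -, hT⟩ := connected_top.exists_isTree_le_of_le_of_isAcyclic le_top hK
  have hTcard := (isTree_iff_connected_and_card.1 hT).2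
  have hKT' : K.edgeSet = T.edgeSet := by
    refine Set.eq_of_subset_of_ncard_le (edgeSet_mono hKT) ?_ (Set.toFinite _)
    rw [← Nat.card_coe_set_eq, ← Nat.card_coe_set_eq]
    omega
  rw [edgeSet_inj.1 hKT']
  exact hT.connected

variable {V : Type*} {G : SimpleGraph V} {C : Set V}

lemma exists_forest_of_connected_induce [Finite V]
    (h : (G.induce C).Connected) :
    ∃ F : Finset (Sym2 V), (F : Set (Sym2 V)) ⊆ G.edgeSet ∧
      (fromEdgeSet (F : Set (Sym2 V))).IsAcyclic ∧ (F : Set (Sym2 V)) ⊆ C.sym2 ∧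
      #F + 1 = Nat.card C := by
  obtain ⟨T, hTG, hT⟩ := h.exists_isTree_le
  have hfin := T.spanningCoe.edgeSet.toFinite
  refine ⟨hfin.toFinset, ?_, ?_, ?_, ?_⟩
  · rw [Set.Finite.coe_toFinset]
    exact edgeSet_mono ((map_monotone _ hTG).trans (spanningCoe_induce_le G C))
  · rw [Set.Finite.coe_toFinset, fromEdgeSet_edgeSet]
    exact hT.isAcyclic.spanningCoe
  · rw [Set.Finite.coe_toFinset, edgeSet_subset_sym2_iff, support_spanningCoe]
    simp
  · rw [← Set.ncard_coe_finset, Set.Finite.coe_toFinset, ← Nat.card_coe_set_eq,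
      card_edgeSet_spanningCoe]
    exact (isTree_iff_connected_and_card.1 hT).2

lemma connected_induce_of_isAcyclic_fromEdgeSet [Finite V] [Nonempty C] {F : Finset (Sym2 V)}
    (hFG : (F : Set (Sym2 V)) ⊆ G.edgeSet) (hF : (fromEdgeSet (F : Set (Sym2 V))).IsAcyclic)
    (hcard : Nat.card C ≤ ((F : Set (Sym2 V)) ∩ C.sym2).ncard + 1) : (G.induce C).Connected := by
  have hnodiag : (F : Set (Sym2 V)) \ Sym2.diagSet = F :=
    sdiff_eq_left.2 (Set.disjoint_left.2 fun e he ↦ G.not_isDiag_of_mem_edgeSet (hFG he))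
  have hKcard : Nat.card ((fromEdgeSet (F : Set (Sym2 V))).induce C).edgeSet =
      ((F : Set (Sym2 V)) ∩ C.sym2).ncard := by
    rw [← card_edgeSet_spanningCoe, edgeSet_spanningCoe_induce, edgeSet_fromEdgeSet, hnodiag,
      Nat.card_coe_set_eq]
  have hKG : (fromEdgeSet (F : Set (Sym2 V))).induce C ≤ G.induce C := fun a b hab ↦ hFG hab.1
  exact ((hF.induce C).connected_of_card_le (hKcard ▸ hcard)).mono hKG

variable [DecidableEq V]

def forestIndicators (G : SimpleGraph V) : Set (Sym2 V → ℝ) :=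
  {z | ∃ F : Finset (Sym2 V), (F : Set (Sym2 V)) ⊆ G.edgeSet ∧
    (fromEdgeSet (F : Set (Sym2 V))).IsAcyclic ∧ z = fun e => if e ∈ F then 1 else 0}

variable [Fintype V] [DecidableRel G.Adj]

lemma sum_indicator_edgeFinset {F : Finset (Sym2 V)} (hFG : (F : Set (Sym2 V)) ⊆ G.edgeSet) :
    ∑ e ∈ G.edgeFinset, (if e ∈ F then 1 else 0 : ℝ) = #F := by
  rw [sum_boole, filter_mem_eq_inter, inter_eq_right.2 fun e he ↦ mem_edgeFinset.2 (hFG he)]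

lemma connected_induce_of_mem_convexHull {y : Sym2 V → ℝ}
    (hy : y ∈ convexHull ℝ (forestIndicators G))
    (hsum : ∑ e ∈ G.edgeFinset, y e = Nat.card C - 1)
    (hout : ∀ u v, G.Adj u v → u ∉ C → y s(u, v) ≤ 0) : (G.induce C).Connected := by
  classical
  have : Nonempty C := by
    obtain ⟨_, ⟨F, hFG, -, rfl⟩, hle⟩ := exists_sum_le_of_mem_convexHull hy G.edgeFinset
    rw [sum_indicator_edgeFinset hFG, hsum] at hle
    have : 0 < Nat.card C := by
      have : (0 : ℝ) ≤ #F := by positivity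
      exact_mod_cast (by linarith : (0 : ℝ) < Nat.card C)
    exact (Nat.card_pos_iff.1 this).1
  have hyC : (Nat.card C : ℝ) - 1 ≤ ∑ e ∈ G.edgeFinset with e ∈ C.sym2, y e := by
    have hneg : ∑ e ∈ G.edgeFinset with e ∉ C.sym2, y e ≤ 0 := by
      refine sum_nonpos fun e he ↦ ?_
      rw [mem_filter, mem_edgeFinset] at he
      induction e using Sym2.ind with
      | _ u v =>
        rw [Set.mk_mem_sym2_iff, not_and_or] at he
        rcases he.2 with hu | hv
        · exact hout u v he.1 hu
        · rw [Sym2.eq_swap]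
          exact hout v u he.1.symm hv
    rw [← hsum, ← sum_filter_add_sum_filter_not G.edgeFinset (· ∈ C.sym2)]
    linarith
  obtain ⟨_, ⟨F, hFG, hF, rfl⟩, hge⟩ :=
    exists_sum_ge_of_mem_convexHull hy (G.edgeFinset.filter (· ∈ C.sym2))
  have hFC : ∑ e ∈ G.edgeFinset with e ∈ C.sym2, (if e ∈ F then 1 else 0 : ℝ) =
      ((F : Set (Sym2 V)) ∩ C.sym2).ncard := by
    rw [sum_boole, ← Set.ncard_coe_finset]
    congr 2
    ext e
    simp only [coe_filter, mem_filter, mem_edgeFinset, Set.sep_inter, Set.mem_inter_iff,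
      Set.mem_ofPred_eq, mem_coe]
    exact ⟨fun h ↦ ⟨h.1.2, h.2.1⟩, fun h ↦ ⟨⟨hFG h.1, h.1⟩, h.2, h.1⟩⟩
  refine connected_induce_of_isAcyclic_fromEdgeSet hFG hF ?_
  beta_reduce at hge
  exact_mod_cast (by linarith : (Nat.card C : ℝ) ≤ ((F : Set (Sym2 V)) ∩ C.sym2).ncard + 1)

end SimpleGraph

open SimpleGraph

lemma sum_indicator_eq_natCard {V : Type*} [Fintype V] (C : Set V) [DecidablePred (· ∈ C)] :
    ∑ v, (if v ∈ C then 1 else 0 : ℝ) = Nat.card C := by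
  rw [sum_boole, Nat.card_eq_fintype_card, Fintype.card_subtype]

theorem stmt_2_general {V : Type*} [Fintype V] [DecidableEq V]
    (G : SimpleGraph V) [DecidableRel G.Adj]
    (C : Set V) [DecidablePred (· ∈ C)]
    (x : V → ℝ) (hx : x = fun v => if v ∈ C then 1 else 0) :
    ((∀ u v : V, G.Adj u v → u ∈ C ∨ v ∈ C) ∧ (G.induce C).Connected) ↔
    ((∀ u v : V, G.Adj u v → x u + x v ≥ 1) ∧
      ∃ y ∈ convexHull ℝ {z : Sym2 V → ℝ | ∃ F : Finset (Sym2 V),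
          (F : Set (Sym2 V)) ⊆ G.edgeSet ∧
          (SimpleGraph.fromEdgeSet (F : Set (Sym2 V))).IsAcyclic ∧
          z = fun e => if e ∈ F then 1 else 0},
        (∑ e ∈ G.edgeFinset, y e = ∑ v, x v - 1) ∧
        (∀ u v : V, G.Adj u v → y s(u, v) ≤ x u ∧ y s(u, v) ≤ x v)) := by
  subst hx
  have hcover : ∀ u v, (u ∈ C ∨ v ∈ C) ↔
      (if u ∈ C then 1 else 0 : ℝ) + (if v ∈ C then 1 else 0) ≥ 1 := by
    intro u v
    by_cases hu : u ∈ C <;> by_cases hv : v ∈ C <;> simp [hu, hv]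
  rw [sum_indicator_eq_natCard]
  constructor
  · rintro ⟨hvc, hconn⟩
    obtain ⟨F, hFG, hF, hFC, hcard⟩ := exists_forest_of_connected_induce hconn
    have hle : ∀ u v, (if s(u, v) ∈ F then 1 else 0 : ℝ) ≤ if u ∈ C then 1 else 0 := by
      intro u v
      split_ifs with he hu <;> norm_num
      exact hu (hFC he).1
    refine ⟨fun u v huv ↦ (hcover u v).1 (hvc u v huv), _, subset_convexHull ℝ _ ⟨F, hFG, hF, rfl⟩,
      ?_, fun u v _ ↦ ⟨hle u v, Sym2.eq_swap ▸ hle v u⟩⟩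
    rw [sum_indicator_edgeFinset hFG, ← hcard]
    push_cast
    ring
  · rintro ⟨hvc, y, hy, hsum, hyx⟩
    refine ⟨fun u v huv ↦ (hcover u v).2 (hvc u v huv),
      connected_induce_of_mem_convexHull hy hsum fun u v huv hu ↦ ?_⟩
    simpa [hu] using (hyx u v huv).1

theorem stmt_2 {V : Type*} [Fintype V] [DecidableEq V]
    (G : SimpleGraph V) [DecidableRel G.Adj] (hG : G.Connected)
    (C : Set V) [DecidablePred (· ∈ C)]
    (x : V → ℝ) (hx : x = fun v => if v ∈ C then 1 else 0) :
    ((∀ u v : V, G.Adj u v → u ∈ C ∨ v ∈ C) ∧ (G.induce C).Connected) ↔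
    ((∀ u v : V, G.Adj u v → x u + x v ≥ 1) ∧
      ∃ y ∈ convexHull ℝ {z : Sym2 V → ℝ | ∃ F : Finset (Sym2 V),
          (F : Set (Sym2 V)) ⊆ G.edgeSet ∧
          (SimpleGraph.fromEdgeSet (F : Set (Sym2 V))).IsAcyclic ∧
          z = fun e => if e ∈ F then 1 else 0},
        (∑ e ∈ G.edgeFinset, y e = ∑ v, x v - 1) ∧
        (∀ u v : V, G.Adj u v → y s(u, v) ≤ x u ∧ y s(u, v) ≤ x v)) :=
  stmt_2_general G C x hx
end

section
/- Let D = (V,A) be a finite directed graph with n = |V| vertices, and let r ∈ V be such that δ⁻(r) = ∅. Let F ⊆ A, and suppose there exists d : V → ℝ such that, with z = χ^F: z(δ⁻(v)) = 1 for all v ∈ V \ {r}; d_v ≥ n·(z_uv − 1) + d_u + 1 for all arcs (u,v) ∈ A; d_r = 0; and z(A) = |V| − 1. Then F is an r-arborescence of D. -/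
/-!
Every vertex other than `r` has exactly one entering arc in `F`, and along an arc of `F`
(where `z = 1`) the constraint reads `d v ≥ d u + 1`, so `d` strictly increases along `F`.
Walking backwards from `v` along the unique entering arcs therefore never revisits a vertex and
can only stop at `r`; by well-founded induction on `d`, this backward walk is the unique
`r`-`v` path in `F`.
-/

/-- `l` is the list of vertices of a directed path from `r` to `v` using arcs of `F`. -/
def IsDirPath {V : Type*} (F : Finset (V × V)) (r v : V) (l : List V) : Prop :=
  l.Nodup ∧ l.head? = some r ∧ l.getLast? = some v ∧
    l.Chain' (fun a b => (a, b) ∈ F)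

namespace IsDirPath

variable {V : Type*} {F : Finset (V × V)} {r u v : V} {l : List V}

lemma singleton : IsDirPath F r r [r] :=
  ⟨List.nodup_singleton r, rfl, rfl, List.isChain_singleton r⟩

lemma eq_singleton (h : IsDirPath F r r l) : l = [r] := by
  obtain ⟨hnd, hhd, hlast, -⟩ := h
  obtain ⟨l', rfl⟩ := List.getLast?_eq_some_iff.mp hlast
  cases l' with
  | nil => rfl
  | cons a t =>
    obtain rfl : a = r := by simpa using hhd
    simp at hnd

lemma concat (h : IsDirPath F r u l) (huv : (u, v) ∈ F) (hv : v ∉ l) :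
    IsDirPath F r v (l ++ [v]) := by
  obtain ⟨hnd, hhd, hlast, hch⟩ := h
  refine ⟨List.nodup_append.mpr ⟨hnd, List.nodup_singleton v, ?_⟩, ?_, by simp, ?_⟩
  · rintro a ha b hb rfl
    exact hv (List.mem_singleton.mp hb ▸ ha)
  · rw [List.head?_append, hhd, Option.some_or]
  · exact hch.append (List.isChain_singleton v) (by simpa [hlast] using huv)

lemma exists_concat (h : IsDirPath F r v l) (hv : v ≠ r) :
    ∃ u l', l = l' ++ [v] ∧ (u, v) ∈ F ∧ IsDirPath F r u l' := by
  obtain ⟨hnd, hhd, hlast, hch⟩ := h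
  obtain ⟨l', rfl⟩ := List.getLast?_eq_some_iff.mp hlast
  obtain ⟨l'', u, rfl⟩ : ∃ l'' u, l' = l'' ++ [u] := by
    rcases List.eq_nil_or_concat l' with rfl | hl'
    · exact absurd (by simpa using hhd) hv
    · simpa using hl'
  have hch' := List.isChain_append.mp hch
  refine ⟨u, l'' ++ [u], rfl, by simpa using hch'.2.2,
    (List.nodup_append.mp hnd).1, ?_, by simp, hch'.1⟩
  simpa [List.head?_append] using hhd

lemma le_of_mem {β : Type*} [Preorder β] {d : V → β} (hd : ∀ a ∈ F, d a.1 < d a.2)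
    (h : IsDirPath F r v l) {w : V} (hw : w ∈ l) : d w ≤ d v := by
  obtain ⟨-, -, hlast, hch⟩ := h
  obtain ⟨l', rfl⟩ := List.getLast?_eq_some_iff.mp hlast
  have hmono : (l' ++ [v]).Pairwise (fun a b => d a < d b) :=
    List.isChain_iff_pairwise.mp (List.IsChain.imp (fun a b hab => hd (a, b) hab) hch)
  rcases List.mem_append.mp hw with hw | hw
  · exact (List.pairwise_append.mp hmono).2.2 w hw v (List.mem_singleton_self v) |>.le
  · rw [List.mem_singleton.mp hw]

end IsDirPath

lemma Finset.existsUnique_fst_of_card_filter_snd_eq_one {V : Type*} {F : Finset (V × V)} {v : V}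
    [DecidablePred fun a : V × V => a.2 = v] (h : (F.filter fun a => a.2 = v).card = 1) :
    ∃! u, (u, v) ∈ F := by
  obtain ⟨a, ha⟩ := Finset.card_eq_one.mp h
  have hmem : ∀ u, (u, v) ∈ F ↔ (u, v) = a := fun u => by
    rw [← Finset.mem_singleton, ← ha, Finset.mem_filter, and_iff_left rfl]
  have ha' : a ∈ F.filter fun a => a.2 = v := by rw [ha]; exact Finset.mem_singleton_self a
  have hav : a.2 = v := (Finset.mem_filter.mp ha').2
  exact ⟨a.1, (hmem a.1).mpr (by rw [← hav]), fun u hu => congrArg Prod.fst ((hmem u).mp hu)⟩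

theorem existsUnique_isDirPath {V β : Type*} [Finite V] [Preorder β] {F : Finset (V × V)} {r : V}
    {d : V → β} (hd : ∀ a ∈ F, d a.1 < d a.2) (hpred : ∀ v, v ≠ r → ∃! u, (u, v) ∈ F)
    (v : V) :
    ∃! l, IsDirPath F r v l := by
  have hwf : WellFounded fun u v => d u < d v :=
    @Finite.wellFounded_of_trans_of_irrefl _ _ _
      ⟨fun _ _ _ => lt_trans⟩ ⟨fun _ => lt_irrefl _⟩
  induction v using hwf.induction with
  | _ v ih =>
  by_cases hv : v = r
  · subst hv
    exact ⟨[v], IsDirPath.singleton, fun l hl => hl.eq_singleton⟩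
  obtain ⟨u, huv, hu⟩ := hpred v hv
  obtain ⟨l, hl, hlu⟩ := ih u (hd _ huv)
  refine ⟨l ++ [v], hl.concat huv fun hvl => (hl.le_of_mem hd hvl).not_gt (hd _ huv), ?_⟩
  intro l' hl'
  obtain ⟨u', l'', rfl, hu'v, hl''⟩ := hl'.exists_concat hv
  obtain rfl := hu u' hu'v
  rw [hlu l'' hl'']

theorem stmt_4_general {V : Type*} [Fintype V] [DecidableEq V]
    (A : Finset (V × V)) (r : V)
    (F : Finset (V × V)) (hFA : F ⊆ A)
    (z : V × V → ℝ) (hz : z = fun a => if a ∈ F then 1 else 0)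
    (d : V → ℝ)
    (hdeg : ∀ v : V, v ≠ r → ∑ a ∈ A.filter (fun a => a.2 = v), z a = 1)
    (hdist : ∀ a ∈ A, d a.2 ≥ (Fintype.card V : ℝ) * (z a - 1) + d a.1 + 1) :
    ∀ v : V, v ≠ r → ∃! l : List V, IsDirPath F r v l := by
  have hd : ∀ a ∈ F, d a.1 < d a.2 := fun a ha => by
    have := hdist a (hFA ha)
    simp only [hz, ha, if_true, sub_self, mul_zero, zero_add] at this
    linarith
  have hpred : ∀ v, v ≠ r → ∃! u, (u, v) ∈ F := fun v hv => by
    have hin : A.filter (fun a => a.2 = v ∧ a ∈ F) = F.filter (fun a => a.2 = v) := by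
      ext a
      simp only [Finset.mem_filter]
      exact ⟨fun h => ⟨h.2.2, h.2.1⟩, fun h => ⟨hFA h.1, h.2, h.1⟩⟩
    have hcard := hdeg v hv
    rw [hz, Finset.sum_boole, Finset.filter_filter, hin] at hcard
    exact Finset.existsUnique_fst_of_card_filter_snd_eq_one (by exact_mod_cast hcard)
  exact fun v _ => existsUnique_isDirPath hd hpred v

theorem stmt_4 {V : Type*} [Fintype V] [DecidableEq V]
    (A : Finset (V × V)) (r : V)
    (hr : ∀ a ∈ A, a.2 ≠ r)
    (F : Finset (V × V)) (hFA : F ⊆ A)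
    (z : V × V → ℝ) (hz : z = fun a => if a ∈ F then 1 else 0)
    (d : V → ℝ)
    (hdeg : ∀ v : V, v ≠ r → ∑ a ∈ A.filter (fun a => a.2 = v), z a = 1)
    (hdist : ∀ a ∈ A, d a.2 ≥ (Fintype.card V : ℝ) * (z a - 1) + d a.1 + 1)
    (hdr : d r = 0)
    (htot : ∑ a ∈ A, z a = (Fintype.card V : ℝ) - 1) :
    ∀ v : V, v ≠ r → ∃! l : List V, IsDirPath F r v l :=
  stmt_4_general A r F hFA z hz d hdeg hdist
end

section
/- Let G = (V,E) be a finite simple connected graph with n = |V|, let r, r₁ ∈ V with rr₁ ∈ E, and let D = (V,A) be the directed graph obtained from G as follows: every edge vr ∈ E becomes the single arc (r,v); every edge vr₁ ∈ E with v ≠ r becomes the single arc (r₁,v); every other edge uv ∈ E is replaced by both arcs (u,v) and (v,u). If C ⊆ V is a connected vertex cover of G, then there exist z : A → {0,1} and d : V → ℝ such that, with x = χ^C: x_u + x_v ≥ 1 for every arc (u,v) ∈ A; z(δ⁻(v)) = x_v for every v ∈ V \ {r, r₁}; d_v ≥ n·(z_uv − 1) + d_u + x_v for every arc (u,v) ∈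 A; d_r = 0; z(A) = x(V) − 1; and z_uv ≤ x_u and z_uv ≤ x_v for every arc (u,v) ∈ A. -/
namespace StmtAux
open Classical

variable {V : Type*} (R : V → V → Prop) (ρ : V)

def chainN : ℕ → V → Prop
  | 0, v => v = ρ
  | n+1, v => ∃ u, chainN n u ∧ R u v

theorem reach_chain {v : V} (h : Relation.ReflTransGen R ρ v) : ∃ n, chainN R ρ n v := by
  induction h with
  | refl => exact ⟨0, rfl⟩
  | tail _ h2 ih => exact ⟨ih.choose + 1, _, ih.choose_spec, h2⟩

open Classical in
noncomputable def distR (v : V) : ℕ := if h : ∃ n, chainN R ρ n v then Nat.find h else 0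

theorem distR_spec {v : V} (h : ∃ n, chainN R ρ n v) : chainN R ρ (distR R ρ v) v := by
  rw [distR, dif_pos h]; exact Nat.find_spec h

theorem distR_le {v : V} {n : ℕ} (h : chainN R ρ n v) : distR R ρ v ≤ n := by
  rw [distR, dif_pos ⟨n, h⟩]; exact Nat.find_le h

theorem distR_root : distR R ρ ρ = 0 :=
  Nat.le_zero.mp (distR_le R ρ (show chainN R ρ 0 ρ from rfl))

theorem distR_eq_zero {v : V} (h : ∃ n, chainN R ρ n v) (h0 : distR R ρ v = 0) : v = ρ := by
  have := distR_spec R ρ h; rwa [h0] at this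

theorem exists_parent {v : V} {m : ℕ} (h : ∃ n, chainN R ρ n v) (hd : distR R ρ v = m + 1) :
    ∃ u, (∃ n, chainN R ρ n u) ∧ distR R ρ u = m ∧ R u v := by
  have hc : chainN R ρ (m+1) v := hd ▸ distR_spec R ρ h
  obtain ⟨u, hu, huv⟩ := hc
  refine ⟨u, ⟨m, hu⟩, ?_, huv⟩
  have h1 : distR R ρ u ≤ m := distR_le R ρ hu
  by_contra hne
  have h2 : distR R ρ u < m := lt_of_le_of_ne h1 hne
  have : chainN R ρ (distR R ρ u + 1) v := ⟨u, distR_spec R ρ ⟨m, hu⟩, huv⟩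
  have := distR_le R ρ this
  omega

theorem exists_dist_eq {v : V} (h : ∃ n, chainN R ρ n v) :
    ∀ i ≤ distR R ρ v, ∃ u, (∃ n, chainN R ρ n u) ∧ distR R ρ u = i := by
  generalize hm : distR R ρ v = m
  induction m generalizing v with
  | zero => intro i hi; exact ⟨v, h, by omega⟩
  | succ m ih =>
    intro i hi
    obtain ⟨u, hu, hdu, _⟩ := exists_parent R ρ h hm
    rcases Nat.lt_or_ge i (m+1) with h' | h'
    · exact ih hu hdu i (by omega)
    · exact ⟨v, h, by omega⟩

theorem distR_lt_card [Fintype V] {v : V} (h : ∃ n, chainN R ρ n v) :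
    distR R ρ v < Fintype.card V := by
  classical
  set m := distR R ρ v with hm
  have hex : ∀ i : Fin (m+1), ∃ u, (∃ n, chainN R ρ n u) ∧ distR R ρ u = i :=
    fun i => exists_dist_eq R ρ h i (by omega)
  choose f hf1 hf2 using hex
  have hinj : Function.Injective f := by
    intro i j hij
    have := hf2 i
    rw [hij, hf2 j] at this
    exact Fin.ext (by exact_mod_cast this.symm)
  have := Fintype.card_le_of_injective f hinj
  simpa using this

open Classical in
noncomputable def parent (v : V) : V :=
  if h : (∃ n, chainN R ρ n v) ∧ distR R ρ v ≠ 0 then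
    (exists_parent R ρ h.1 (Nat.succ_pred_eq_of_pos (Nat.pos_of_ne_zero h.2)).symm).choose
  else v

theorem parent_spec {v : V} (h : ∃ n, chainN R ρ n v) (h0 : distR R ρ v ≠ 0) :
    (∃ n, chainN R ρ n (parent R ρ v)) ∧ distR R ρ (parent R ρ v) + 1 = distR R ρ v
      ∧ R (parent R ρ v) v := by
  rw [parent, dif_pos ⟨h, h0⟩]
  obtain ⟨h1, h2, h3⟩ := (exists_parent R ρ h
    (Nat.succ_pred_eq_of_pos (Nat.pos_of_ne_zero h0)).symm).choose_spec
  exact ⟨h1, by rw [h2]; exact Nat.succ_pred_eq_of_pos (Nat.pos_of_ne_zero h0), h3⟩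

end StmtAux

theorem stmt_8 {V : Type*} [Fintype V] [DecidableEq V]
    (G : SimpleGraph V) [DecidableRel G.Adj] (hG : G.Connected)
    (r r₁ : V) (hrr₁ : G.Adj r r₁)
    (A : Finset (V × V))
    (hA : ∀ a : V × V, a ∈ A ↔ G.Adj a.1 a.2 ∧ a.2 ≠ r ∧ (a.2 = r₁ → a.1 = r))
    (C : Set V) [DecidablePred (· ∈ C)]
    (hcover : ∀ u v : V, G.Adj u v → u ∈ C ∨ v ∈ C)
    (hconn : (G.induce C).Connected)
    (x : V → ℝ) (hx : x = fun v => if v ∈ C then 1 else 0) :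
    ∃ (z : V × V → ℝ) (d : V → ℝ),
      (∀ a ∈ A, z a = 0 ∨ z a = 1) ∧
      (∀ a ∈ A, x a.1 + x a.2 ≥ 1) ∧
      (∀ v : V, v ≠ r → v ≠ r₁ → ∑ a ∈ A.filter (fun a => a.2 = v), z a = x v) ∧
      (∀ a ∈ A, d a.2 ≥ (Fintype.card V : ℝ) * (z a - 1) + d a.1 + x a.2) ∧
      d r = 0 ∧
      (∑ a ∈ A, z a = ∑ v, x v - 1) ∧
      (∀ a ∈ A, z a ≤ x a.1 ∧ z a ≤ x a.2) := by
  classical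
  set R : V → V → Prop := fun u v => (u, v) ∈ A ∧ u ∈ C ∧ v ∈ C with hRdef
  set ρ : V := if r ∈ C then r else r₁ with hρdef
  have hρC : ρ ∈ C := by
    by_cases h : r ∈ C
    · rw [hρdef, if_pos h]; exact h
    · rw [hρdef, if_neg h]
      rcases hcover r r₁ hrr₁ with h' | h'
      · exact absurd h' h
      · exact h'
  have hρor : ρ = r ∨ ρ = r₁ := by
    by_cases h : r ∈ C
    · left; rw [hρdef, if_pos h]
    · right; rw [hρdef, if_neg h]
  -- step lemma
  have hstep : ∀ u v : V, G.Adj u v → u ∈ C → v ∈ C →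
      Relation.ReflTransGen R ρ u → Relation.ReflTransGen R ρ v := by
    intro u v hadj huC hvC hu
    by_cases hvr : v = r
    · have : ρ = r := by rw [hρdef, if_pos (hvr ▸ hvC)]
      rw [← hvr] at this
      exact this ▸ Relation.ReflTransGen.refl
    by_cases hvr1 : v = r₁
    · by_cases hrC : r ∈ C
      · have hρr : ρ = r := by rw [hρdef, if_pos hrC]
        have hArv : (r, v) ∈ A :=
          (hA (r, v)).2 ⟨by rw [hvr1]; exact hrr₁, hvr, fun _ => rfl⟩
        rw [hρr]
        exact Relation.ReflTransGen.single ⟨hArv, hrC, hvC⟩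
      · have hρr : ρ = r₁ := by rw [hρdef, if_neg hrC]
        rw [hρr, hvr1]
    · have hAuv : (u, v) ∈ A := (hA (u, v)).2 ⟨hadj, hvr, fun h => absurd h hvr1⟩
      exact hu.tail ⟨hAuv, huC, hvC⟩
  have hwalk : ∀ (a b : ↑C), (G.induce C).Walk a b →
      Relation.ReflTransGen R ρ a.1 → Relation.ReflTransGen R ρ b.1 := by
    intro a b w
    induction w with
    | nil => exact id
    | @cons c e f h p ih =>
      intro ha
      exact ih (hstep c.1 e.1 h c.2 e.2 ha)
  have hreach : ∀ v ∈ C, ∃ n, StmtAux.chainN R ρ n v := by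
    intro v hv
    obtain ⟨w⟩ := hconn.preconnected ⟨ρ, hρC⟩ ⟨v, hv⟩
    exact StmtAux.reach_chain R ρ (hwalk _ _ w Relation.ReflTransGen.refl)
  set p : V → V := StmtAux.parent R ρ with hpdef
  have hpar : ∀ v, v ∈ C → v ≠ ρ →
      (p v, v) ∈ A ∧ p v ∈ C ∧ StmtAux.distR R ρ (p v) + 1 = StmtAux.distR R ρ v ∧
        (∃ n, StmtAux.chainN R ρ n (p v)) := by
    intro v hv hvρ
    have h0 : StmtAux.distR R ρ v ≠ 0 := fun h =>
      hvρ (StmtAux.distR_eq_zero R ρ (hreach v hv) h)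
    obtain ⟨h1, h2, h3⟩ := StmtAux.parent_spec R ρ (hreach v hv) h0
    exact ⟨h3.1, h3.2.1, h2, h1⟩
  set z : V × V → ℝ :=
    fun a => if a.2 ∈ C ∧ a.2 ≠ ρ ∧ a.1 = p a.2 then 1 else 0 with hzdef
  set d : V → ℝ := fun v => if v ∈ C then ((StmtAux.distR R ρ v : ℕ) : ℝ) else 0 with hddef
  have : Nonempty V := ⟨r⟩
  have hn1 : (1 : ℕ) ≤ Fintype.card V := Fintype.card_pos
  refine ⟨z, d, ?_, ?_, ?_, ?_, ?_, ?_, ?_⟩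
  · intro a _
    rw [hzdef]; dsimp only
    split
    · right; rfl
    · left; rfl
  · intro a ha
    rw [hx]; dsimp only
    rcases hcover a.1 a.2 ((hA a).1 ha).1 with h | h
    · rw [if_pos h]
      have : (0:ℝ) ≤ if a.2 ∈ C then 1 else 0 := by split <;> norm_num
      linarith
    · rw [if_pos h]
      have : (0:ℝ) ≤ if a.1 ∈ C then 1 else 0 := by split <;> norm_num
      linarith
  · intro v hvr hvr1
    have hvρ : v ≠ ρ := by rcases hρor with h | h <;> rw [h] <;> assumption
    by_cases hv : v ∈ C
    · obtain ⟨hpA, hpC, _, _⟩ := hpar v hv hvρ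
      have hxv : x v = 1 := by rw [hx]; exact if_pos hv
      rw [hxv]
      have hcongr : ∀ a ∈ A.filter (fun a => a.2 = v),
          z a = if a = (p v, v) then (1:ℝ) else 0 := by
        intro a ha
        have ha2 : a.2 = v := (Finset.mem_filter.mp ha).2
        rw [hzdef]; dsimp only
        congr 1
        simp only [eq_iff_iff]
        constructor
        · rintro ⟨_, _, h3⟩
          exact Prod.ext (by rw [h3, ha2]) ha2
        · rintro rfl
          exact ⟨hv, hvρ, rfl⟩
      rw [Finset.sum_congr rfl hcongr, Finset.sum_ite_eq' (A.filter fun a => a.2 = v) (p v, v)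
        (fun _ => (1:ℝ))]
      rw [if_pos (Finset.mem_filter.mpr ⟨hpA, (rfl : ((p v, v) : V × V).2 = v)⟩)]
    · have hxv : x v = 0 := by rw [hx]; exact if_neg hv
      rw [hxv]
      refine Finset.sum_eq_zero fun a ha => ?_
      have ha2 : a.2 = v := (Finset.mem_filter.mp ha).2
      rw [hzdef]; dsimp only
      exact if_neg (fun h => hv (ha2 ▸ h.1))
  · intro a ha
    by_cases hcond : a.2 ∈ C ∧ a.2 ≠ ρ ∧ a.1 = p a.2
    · obtain ⟨h1, h2, h3⟩ := hcond
      obtain ⟨hpA, hpC, hdist, _⟩ := hpar a.2 h1 h2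
      have hz1 : z a = 1 := by rw [hzdef]; exact if_pos ⟨h1, h2, h3⟩
      have hd2 : d a.2 = ((StmtAux.distR R ρ a.2 : ℕ) : ℝ) := by
        rw [hddef]; exact if_pos h1
      have hd1 : d a.1 = ((StmtAux.distR R ρ (p a.2) : ℕ) : ℝ) := by
        rw [hddef, h3]; exact if_pos hpC
      have hx2 : x a.2 = 1 := by rw [hx]; exact if_pos h1
      rw [hz1, hd2, hd1, hx2, ← hdist]
      push_cast
      linarith
    · have hz0 : z a = 0 := by rw [hzdef]; exact if_neg hcond
      have hd2 : (0:ℝ) ≤ d a.2 := by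
        rw [hddef]; dsimp only; split
        · positivity
        · exact le_rfl
      have hd1 : d a.1 ≤ (Fintype.card V : ℝ) - 1 := by
        rw [hddef]; dsimp only
        split
        · next h =>
          have hlt : StmtAux.distR R ρ a.1 + 1 ≤ Fintype.card V :=
            Nat.succ_le_of_lt (StmtAux.distR_lt_card R ρ (hreach a.1 h))
          have hlt' : (StmtAux.distR R ρ a.1 : ℝ) + 1 ≤ (Fintype.card V : ℝ) := by
            exact_mod_cast hlt
          linarith
        · have : (1:ℝ) ≤ (Fintype.card V : ℝ) := by exact_mod_cast hn1
          linarith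
      have hx2 : x a.2 ≤ 1 := by
        rw [hx]; dsimp only; split <;> norm_num
      rw [hz0]
      linarith
  · rw [hddef]; dsimp only
    by_cases h : r ∈ C
    · rw [if_pos h]
      have : ρ = r := by rw [hρdef, if_pos h]
      rw [← this, StmtAux.distR_root]
      norm_num
    · rw [if_neg h]
  · have hLHS : ∑ a ∈ A, z a =
        ((A.filter (fun a => a.2 ∈ C ∧ a.2 ≠ ρ ∧ a.1 = p a.2)).card : ℝ) := by
      rw [hzdef]
      rw [Finset.sum_ite, Finset.sum_const, Finset.sum_const_zero]
      simp
    have hRHS : ∑ v, x v = (C.toFinset.card : ℝ) := by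
      rw [hx]
      rw [Finset.sum_ite, Finset.sum_const, Finset.sum_const_zero]
      simp [Set.toFinset]
    have hcard : (A.filter (fun a => a.2 ∈ C ∧ a.2 ≠ ρ ∧ a.1 = p a.2)).card =
        (C.toFinset.erase ρ).card := by
      apply Finset.card_bij (fun a _ => a.2)
      · intro a ha
        obtain ⟨_, h1, h2, _⟩ := Finset.mem_filter.mp ha
        exact Finset.mem_erase.mpr ⟨h2, Set.mem_toFinset.mpr h1⟩
      · intro a ha b hb hab
        obtain ⟨_, _, _, h3⟩ := Finset.mem_filter.mp ha
        obtain ⟨_, _, _, h3'⟩ := Finset.mem_filter.mp hb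
        exact Prod.ext (by rw [h3, h3', hab]) hab
      · intro v hv
        obtain ⟨hvρ, hvC⟩ := Finset.mem_erase.mp hv
        have hvC' := Set.mem_toFinset.mp hvC
        obtain ⟨hpA, _, _, _⟩ := hpar v hvC' hvρ
        exact ⟨(p v, v), Finset.mem_filter.mpr ⟨hpA, hvC', hvρ, rfl⟩, rfl⟩
    have hρmem : ρ ∈ C.toFinset := Set.mem_toFinset.mpr hρC
    have hpos : 1 ≤ C.toFinset.card := Finset.card_pos.mpr ⟨ρ, hρmem⟩
    rw [hLHS, hRHS, hcard, Finset.card_erase_of_mem hρmem]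
    rw [Nat.cast_sub hpos]
    norm_num
  · intro a ha
    rw [hzdef, hx]; dsimp only
    by_cases hcond : a.2 ∈ C ∧ a.2 ≠ ρ ∧ a.1 = p a.2
    · obtain ⟨h1, h2, h3⟩ := hcond
      obtain ⟨_, hpC, _, _⟩ := hpar a.2 h1 h2
      rw [if_pos ⟨h1, h2, h3⟩, if_pos h1, if_pos (h3 ▸ hpC)]
      exact ⟨le_refl 1, le_refl 1⟩
    · rw [if_neg hcond]
      constructor <;> (split <;> norm_num)
end

section
/- Let G = (V,E) be a finite simple connected graph with n = |V|, let r, r₁ ∈ V with rr₁ ∈ E, and let D = (V,A) be the directed graph obtained from G as follows: every edge vr ∈ E becomes the single arc (r,v); every edge vr₁ ∈ E with v ≠ r becomes the single arc (r₁,v); every other edge uv ∈ E is replaced by both arcs (u,v) and (v,u). Let C ⊆ V and suppose there exist z : A → {0,1} and d : V → ℝ such that, with x = χ^C: x_u + x_v ≥ 1 for every arc (u,v) ∈ A; z(δ⁻(v)) = x_v for every v ∈ V \ {r, r₁}; d_v ≥ n·(z_uv − 1) + d_u + x_v for every arc (u,v) ∈ A; d_r = 0; z(A) = x(V) − 1;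 and z_uv ≤ x_u and z_uv ≤ x_v for every arc (u,v) ∈ A. Then C is a connected vertex cover of G. -/
theorem stmt_9 {V : Type*} [Fintype V] [DecidableEq V]
    (G : SimpleGraph V) [DecidableRel G.Adj] (hG : G.Connected)
    (r r₁ : V) (hrr₁ : G.Adj r r₁)
    (A : Finset (V × V))
    (hA : ∀ a : V × V, a ∈ A ↔ G.Adj a.1 a.2 ∧ a.2 ≠ r ∧ (a.2 = r₁ → a.1 = r))
    (C : Set V) [DecidablePred (· ∈ C)]
    (x : V → ℝ) (hx : x = fun v => if v ∈ C then 1 else 0)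
    (z : V × V → ℝ) (d : V → ℝ)
    (hz01 : ∀ a ∈ A, z a = 0 ∨ z a = 1)
    (hcov : ∀ a ∈ A, x a.1 + x a.2 ≥ 1)
    (hdeg : ∀ v : V, v ≠ r → v ≠ r₁ → ∑ a ∈ A.filter (fun a => a.2 = v), z a = x v)
    (hdist : ∀ a ∈ A, d a.2 ≥ (Fintype.card V : ℝ) * (z a - 1) + d a.1 + x a.2)
    (hdr : d r = 0)
    (htot : ∑ a ∈ A, z a = ∑ v, x v - 1)
    (hlink : ∀ a ∈ A, z a ≤ x a.1 ∧ z a ≤ x a.2) :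
    (∀ u v : V, G.Adj u v → u ∈ C ∨ v ∈ C) ∧ (G.induce C).Connected := by
  have hne : r ≠ r₁ := hrr₁.ne
  have hx1 : ∀ v ∈ C, x v = 1 := by intro v hv; simp [hx, hv]
  have hx0 : ∀ v, v ∉ C → x v = 0 := by intro v hv; simp [hx, hv]
  have hxmem : ∀ v, 1 ≤ x v → v ∈ C := by
    intro v hv
    by_contra h
    rw [hx0 v h] at hv; linarith
  -- vertex cover
  have hcover : ∀ u v : V, G.Adj u v → u ∈ C ∨ v ∈ C := by
    intro u v huv
    have harc : ∃ a ∈ A, (a = (u, v) ∨ a = (v, u)) := by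
      by_cases hvr : v = r
      · exact ⟨(v, u), (hA (v, u)).2 ⟨(hvr ▸ huv.symm : G.Adj v u),
          fun h => huv.ne (h.trans hvr.symm), fun h => by rw [hvr]⟩, Or.inr rfl⟩
      · by_cases hur : u = r
        · exact ⟨(u, v), (hA (u, v)).2 ⟨huv, hvr, fun h => hur⟩, Or.inl rfl⟩
        · by_cases hvr₁ : v = r₁
          · refine ⟨(v, u), (hA (v, u)).2 ⟨huv.symm, hur, fun h => absurd (h.trans hvr₁.symm) huv.ne⟩,
              Or.inr rfl⟩
          · exact ⟨(u, v), (hA (u, v)).2 ⟨huv, hvr, fun h => absurd h hvr₁⟩, Or.inl rfl⟩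
    obtain ⟨a, ha, hao⟩ := harc
    have := hcov a ha
    by_contra h
    push_neg at h
    rcases hao with rfl | rfl <;>
      simp only [hx0 u h.1, hx0 v h.2] at this <;> linarith
  refine ⟨hcover, ?_⟩
  -- the arc (r, r₁) is in A
  have hrrA : (r, r₁) ∈ A := (hA (r, r₁)).2 ⟨hrr₁, hne.symm, fun _ => rfl⟩
  -- key: z (r, r₁) = x r + x r₁ - 1
  have hkey : z (r, r₁) = x r + x r₁ - 1 := by
    have hfib : ∑ v, ∑ a ∈ A.filter (fun a => a.2 = v), z a = ∑ a ∈ A, z a :=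
      Finset.sum_fiberwise A (fun a => a.2) z
    have hinr : ∑ a ∈ A.filter (fun a => a.2 = r), z a = 0 := by
      apply Finset.sum_eq_zero
      intro a ha
      simp only [Finset.mem_filter] at ha
      exact absurd ha.2 ((hA a).1 ha.1).2.1
    have hinr₁ : ∑ a ∈ A.filter (fun a => a.2 = r₁), z a = z (r, r₁) := by
      have : A.filter (fun a => a.2 = r₁) = {(r, r₁)} := by
        ext a
        simp only [Finset.mem_filter, Finset.mem_singleton]
        constructor
        · rintro ⟨ha, h2⟩
          have h1 := ((hA a).1 ha).2.2 h2
          exact Prod.ext h1 h2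
        · rintro rfl
          exact ⟨hrrA, rfl⟩
      rw [this, Finset.sum_singleton]
    set S : Finset V := {r, r₁} with hS
    have hsplit : ∀ f : V → ℝ, ∑ v ∈ S, f v + ∑ v ∈ Sᶜ, f v = ∑ v, f v := by
      intro f; exact Finset.sum_add_sum_compl S f
    have hpair : ∀ f : V → ℝ, ∑ v ∈ S, f v = f r + f r₁ := by
      intro f; exact Finset.sum_pair hne
    have hrest : ∑ v ∈ Sᶜ, (∑ a ∈ A.filter (fun a => a.2 = v), z a) = ∑ v ∈ Sᶜ, x v := by
      apply Finset.sum_congr rfl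
      intro v hv
      simp only [hS, Finset.mem_compl, Finset.mem_insert, Finset.mem_singleton, not_or] at hv
      exact hdeg v hv.1 hv.2
    have e1 := hsplit (fun v => ∑ a ∈ A.filter (fun a => a.2 = v), z a)
    have e2 := hsplit x
    have e3 := hpair (fun v => ∑ a ∈ A.filter (fun a => a.2 = v), z a)
    have e4 := hpair x
    rw [hfib, htot] at e1
    rw [e3, hinr, hinr₁, hrest] at e1
    linarith [e1, e2, e4]
  -- root
  set w : V := if r ∈ C then r else r₁ with hw
  have hwC : w ∈ C := by
    by_cases h : r ∈ C
    · simp [hw, h]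
    · rcases hcover r r₁ hrr₁ with h' | h'
      · exact absurd h' h
      · simp [hw, h, h']
  -- parent lemma
  have hparent : ∀ v ∈ C, v ≠ w → ∃ p, p ∈ C ∧ G.Adj p v ∧ d p + 1 ≤ d v := by
    intro v hv hvw
    by_cases hvr : v = r
    · exfalso
      apply hvw
      rw [hw, hvr]
      simp [hvr ▸ hv]
    by_cases hvr₁ : v = r₁
    · -- then r ∈ C (else w = r₁ = v)
      have hrC : r ∈ C := by
        by_contra h
        exact hvw (by simp [hw, h, hvr₁])
      have hz1 : z (r, r₁) = 1 := by
        rw [hkey, hx1 r hrC, hx1 r₁ (hvr₁ ▸ hv)]; ring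
      have := hdist (r, r₁) hrrA
      refine ⟨r, hrC, hvr₁ ▸ hrr₁, ?_⟩
      simp only at this
      rw [hz1, hx1 r₁ (hvr₁ ▸ hv)] at this
      rw [hvr₁]
      linarith
    · have hsum := hdeg v hvr hvr₁
      rw [hx1 v hv] at hsum
      have : ∃ a ∈ A.filter (fun a => a.2 = v), z a = 1 := by
        by_contra h
        push_neg at h
        have : ∑ a ∈ A.filter (fun a => a.2 = v), z a = 0 := by
          apply Finset.sum_eq_zero
          intro a ha
          rcases hz01 a (Finset.mem_filter.1 ha).1 with h0 | h1
          · exact h0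
          · exact absurd h1 (h a ha)
        rw [this] at hsum; norm_num at hsum
      obtain ⟨a, ha, hza⟩ := this
      rw [Finset.mem_filter] at ha
      obtain ⟨haA, ha2⟩ := ha
      have hpC : a.1 ∈ C := by
        apply hxmem
        have := (hlink a haA).1
        linarith [this, hza]
      have hadj : G.Adj a.1 v := ha2 ▸ ((hA a).1 haA).1
      have hd := hdist a haA
      rw [hza, ha2, hx1 v hv] at hd
      exact ⟨a.1, hpC, hadj, by linarith⟩
  -- connectivity by strong induction on a finite measure
  have main : ∀ n : ℕ, ∀ v, ∀ hv : v ∈ C,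
      (Finset.univ.filter (fun u => u ∈ C ∧ d u < d v)).card ≤ n →
      (G.induce C).Reachable ⟨v, hv⟩ ⟨w, hwC⟩ := by
    intro n
    induction n with
    | zero =>
      intro v hv hcard
      by_cases hvw : v = w
      · subst hvw; rfl
      · obtain ⟨p, hpC, hadj, hdp⟩ := hparent v hv hvw
        exfalso
        have hpin : p ∈ Finset.univ.filter (fun u => u ∈ C ∧ d u < d v) := by
          simp only [Finset.mem_filter, Finset.mem_univ, true_and]
          exact ⟨hpC, by linarith⟩
        have := Finset.card_pos.2 ⟨p, hpin⟩
        omega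
    | succ n ih =>
      intro v hv hcard
      by_cases hvw : v = w
      · subst hvw; rfl
      · obtain ⟨p, hpC, hadj, hdp⟩ := hparent v hv hvw
        have hss : (Finset.univ.filter (fun u => u ∈ C ∧ d u < d p)) ⊂
            (Finset.univ.filter (fun u => u ∈ C ∧ d u < d v)) := by
          constructor
          · intro u hu
            simp only [Finset.mem_filter, Finset.mem_univ, true_and] at hu ⊢
            exact ⟨hu.1, by linarith⟩
          · intro h
            have hpin : p ∈ Finset.univ.filter (fun u => u ∈ C ∧ d u < d v) := by
              simp only [Finset.mem_filter, Finset.mem_univ, true_and]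
              exact ⟨hpC, by linarith⟩
            have := h hpin
            simp only [Finset.mem_filter, Finset.mem_univ, true_and] at this
            linarith [this.2]
        have hlt := Finset.card_lt_card hss
        have hreach : (G.induce C).Reachable ⟨p, hpC⟩ ⟨w, hwC⟩ :=
          ih p hpC (by omega)
        have hadj' : (G.induce C).Adj ⟨v, hv⟩ ⟨p, hpC⟩ := hadj.symm
        exact (hadj'.reachable).trans hreach
  rw [SimpleGraph.connected_iff]
  refine ⟨?_, ⟨⟨w, hwC⟩⟩⟩
  rintro ⟨u, hu⟩ ⟨v, hv⟩
  exact (main _ u hu le_rfl).trans (main _ v hv le_rfl).symm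
end
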